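/- arXiv:2107.05815 — 3 statements merged into one kernel-verified Lean document; each statement's English description precedes it below -/
import Mathlib

section
/- Occlusion inequality: In ℝ², let O, w, u be points with w strictly between O and u on a common ray (dist(O,w) = d, dist(w,u) = c, dist(O,u) = d + c, with d, c > 0). Let p be a point with dist(p, u) ≤ dist(p, w) and dist(p, u) ≥ m/2 for some m > 0. Then dist(O, p)² ≥ (d + c/2)² + m²/4 − c²/4 = d² + dc + m²/4. -/
set_option maxHeartbeats 800000


theorem stmt2 (O w u p : EuclideanSpace ℝ (Fin 2)) (d c m : ℝ)
    (hd : d = dist O w) (hdpos : 0 < d) (hcpos : 0 < c) (hm : 0 < m)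
    (hu : u = O + ((d + c) / d) • (w - O))
    (hside : dist p u ≤ dist p w) (hfar : m / 2 ≤ dist p u) :
    dist O p ^ 2 ≥ d ^ 2 + d * c + m ^ 2 / 4 := by
  have hd0 : d ≠ 0 := ne_of_gt hdpos
  set k : ℝ := (d + c) / d with hk
  have hkd : k * d = d + c := by rw [hk]; field_simp
  have hkpos : 0 < k := by positivity
  have ha : ‖w - O‖ = d := by rw [hd, dist_comm, dist_eq_norm]
  have hpw : p - w = (p - O) - (w - O) := by abel
  have hpu : p - u = (p - O) - k • (w - O) := by rw [hu]; module
  set x : EuclideanSpace ℝ (Fin 2) := p - O with hx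
  set a : EuclideanSpace ℝ (Fin 2) := w - O with haa
  set t : ℝ := (inner ℝ x a : ℝ) with ht
  have h1 : ‖x - a‖ ^ 2 = ‖x‖ ^ 2 - 2 * t + d ^ 2 := by
    rw [@norm_sub_sq_real, ha, ht]
  have h2 : ‖x - k • a‖ ^ 2 = ‖x‖ ^ 2 - 2 * (k * t) + k ^ 2 * d ^ 2 := by
    rw [@norm_sub_sq_real, real_inner_smul_right, norm_smul, Real.norm_eq_abs, ha,
      mul_pow, sq_abs, ht]
  have hsq : ‖x - k • a‖ ^ 2 ≤ ‖x - a‖ ^ 2 := by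
    have := hside
    rw [dist_eq_norm, dist_eq_norm, hpu, hpw] at this
    exact pow_le_pow_left₀ (norm_nonneg _) this 2
  have hfsq : (m / 2) ^ 2 ≤ ‖x - k • a‖ ^ 2 := by
    have := hfar
    rw [dist_eq_norm, hpu] at this
    exact pow_le_pow_left₀ (by positivity) this 2
  have hgoal : dist O p = ‖x‖ := by rw [dist_eq_norm, hx, norm_sub_rev]
  rw [hgoal]
  rw [h1, h2] at hsq
  rw [h2] at hfsq
  have h3 : 2 * (k - 1) * t ≥ (k * d) ^ 2 - d ^ 2 := by nlinarith
  have h4 : (k - 1) * d = c := by rw [hk]; field_simp; ring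
  have h5 : 2 * c * t ≥ ((d + c) ^ 2 - d ^ 2) * d := by
    have h5' := mul_le_mul_of_nonneg_right h3 hdpos.le
    calc ((d + c) ^ 2 - d ^ 2) * d = ((k * d) ^ 2 - d ^ 2) * d := by rw [hkd]
      _ ≤ 2 * (k - 1) * t * d := h5'
      _ = 2 * ((k - 1) * d) * t := by ring
      _ = 2 * c * t := by rw [h4]
  have htlb : d * (2 * d + c) / 2 ≤ t := by nlinarith
  have h6 : k * t ≥ (d + c) * (2 * d + c) / 2 := by
    calc (d + c) * (2 * d + c) / 2 = (k * d) * (2 * d + c) / 2 := by rw [hkd]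
      _ = k * (d * (2 * d + c) / 2) := by ring
      _ ≤ k * t := by exact mul_le_mul_of_nonneg_left htlb hkpos.le
  have h7 : k ^ 2 * d ^ 2 = (d + c) ^ 2 := by rw [← mul_pow, hkd]
  rw [h7] at hfsq
  nlinarith [hfsq, h6]
end

section
/- Main theorem (set form): Let O ∈ ℝ², W ⊆ ℝ² nonempty closed (walls). Define the visible set V = {w ∈ W : dist(O,w) ≤ R and no x ∈ W lies strictly between O and w}. Assume: (a) R > L + ℓ + M/2; (b) every x ∈ W satisfies dist(O,x) ≥ D with D² ≥ (L+ℓ)² − m²/4; (c) p is a point with dist(O,p) ≤ L + ℓ, infDist(p, W) ≤ M/2, and infDist(p, W) ≥ m/2. Then infDist(p, V) = infDist(p, W), and every nearest point of W to p belongs to V. -/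
/-! A nearest wall point `w` to `p` is within lidar range by the triangle inequality.
If a wall point `x = O + s (w - O)` with `0 < s < 1` occluded it, then `|p - x| ≥ |p - w|` forces
`2⟨p - O, w - O⟩ ≥ (1 + s) |w - O|²`, whence
`|p - w|² ≤ |p - O|² - s |w - O|² < (L + ℓ)² - D² ≤ m² / 4`, contradicting `|p - w| ≥ m / 2`. -/

theorem Metric.infDist_eq_of_subset_of_mem {α : Type*} [PseudoMetricSpace α] {s t : Set α}
    {p w : α} (hst : s ⊆ t) (hw : w ∈ s) (hpw : Metric.infDist p t = dist p w) :
    Metric.infDist p s = Metric.infDist p t :=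
  le_antisymm (hpw ▸ Metric.infDist_le_dist_of_mem hw)
    (Metric.infDist_le_infDist_of_subset hst ⟨w, hw⟩)

variable {E : Type*} [NormedAddCommGroup E] [InnerProductSpace ℝ E]

theorem norm_sub_sq_le_of_norm_sub_le_norm_sub_smul {v u : E} {s : ℝ} (hs : s < 1)
    (h : ‖v - u‖ ≤ ‖v - s • u‖) : ‖v - u‖ ^ 2 ≤ ‖v‖ ^ 2 - s * ‖u‖ ^ 2 := by
  have hsq : ‖v - u‖ ^ 2 ≤ ‖v - s • u‖ ^ 2 := pow_le_pow_left₀ (norm_nonneg _) h 2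
  rw [norm_sub_sq_real, norm_sub_sq_real, real_inner_smul_right, norm_smul, mul_pow,
    Real.norm_eq_abs, sq_abs] at hsq
  have hinner : (1 + s) * ‖u‖ ^ 2 ≤ 2 * inner ℝ v u := by
    by_contra! hlt
    nlinarith [mul_lt_mul_of_pos_left hlt (sub_pos.2 hs)]
  rw [norm_sub_sq_real]
  linarith

theorem sq_lt_mul_norm_sq_of_le_norm_smul {u : E} {s D : ℝ} (hD : 0 < D) (hs : 0 < s)
    (hs1 : s < 1) (h : D ≤ ‖s • u‖) : D ^ 2 < s * ‖u‖ ^ 2 := by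
  rw [norm_smul, Real.norm_of_nonneg hs.le] at h
  have hu_pos : 0 < ‖u‖ := pos_of_mul_pos_right (hD.trans_le h) hs.le
  have hu : D < ‖u‖ := h.trans_lt (mul_lt_of_lt_one_left hu_pos hs1)
  nlinarith

theorem not_occluded_of_isNearest {W : Set E} {O p w : E} {D : ℝ} (hD : 0 < D)
    (hDist : ∀ x ∈ W, D ≤ dist O x) (hnear : ∀ x ∈ W, dist p w ≤ dist p x)
    (hfar : dist O p ^ 2 - D ^ 2 ≤ dist p w ^ 2) :
    ¬ ∃ x ∈ W, ∃ s : ℝ, 0 < s ∧ s < 1 ∧ x = O + s • (w - O) := by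
  rintro ⟨x, hxW, s, hs0, hs1, rfl⟩
  have hpx : p - (O + s • (w - O)) = (p - O) - s • (w - O) := by abel
  have hpw : p - w = (p - O) - (w - O) := by abel
  have hclose := norm_sub_sq_le_of_norm_sub_le_norm_sub_smul hs1
    (by simpa only [dist_eq_norm, hpx, hpw] using hnear _ hxW)
  have hwall := sq_lt_mul_norm_sq_of_le_norm_smul hD hs0 hs1
    (by simpa only [dist_eq_norm', add_sub_cancel_left] using hDist _ hxW)
  rw [dist_eq_norm' O p, dist_eq_norm p w, hpw] at hfar
  linarith

theorem stmt8_general (O p : EuclideanSpace ℝ (Fin 2)) (W : Set (EuclideanSpace ℝ (Fin 2)))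
    (hWne : W.Nonempty) (hWclosed : IsClosed W)
    (m M L ℓ R D : ℝ)
    (hm : 0 < m) (hDpos : 0 < D)
    (hR : R > L + ℓ + M / 2)
    (hDist : ∀ x ∈ W, D ≤ dist O x)
    (hD : D ^ 2 ≥ (L + ℓ) ^ 2 - m ^ 2 / 4)
    (hp : dist O p ≤ L + ℓ)
    (hpM : Metric.infDist p W ≤ M / 2)
    (hpm : m / 2 ≤ Metric.infDist p W) :
    Metric.infDist p {w ∈ W | dist O w ≤ R ∧
        ¬ ∃ x ∈ W, ∃ s : ℝ, 0 < s ∧ s < 1 ∧ x = O + s • (w - O)} = Metric.infDist p W ∧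
      ∀ w ∈ W, dist p w = Metric.infDist p W →
        w ∈ {w ∈ W | dist O w ≤ R ∧
          ¬ ∃ x ∈ W, ∃ s : ℝ, 0 < s ∧ s < 1 ∧ x = O + s • (w - O)} := by
  have nearest_visible : ∀ w ∈ W, dist p w = Metric.infDist p W →
      w ∈ {w ∈ W | dist O w ≤ R ∧
        ¬ ∃ x ∈ W, ∃ s : ℝ, 0 < s ∧ s < 1 ∧ x = O + s • (w - O)} := by
    intro w hw hpw
    have hOp : dist O p ^ 2 ≤ (L + ℓ) ^ 2 := pow_le_pow_left₀ dist_nonneg hp 2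
    have hpw_sq : (m / 2) ^ 2 ≤ dist p w ^ 2 :=
      pow_le_pow_left₀ (by positivity) (hpm.trans_eq hpw.symm) 2
    refine ⟨hw, by linarith [dist_triangle O p w], ?_⟩
    exact not_occluded_of_isNearest hDpos hDist
      (fun _ hx => hpw.trans_le (Metric.infDist_le_dist_of_mem hx)) (by linarith)
  obtain ⟨w, hw, hpw⟩ := hWclosed.exists_infDist_eq_dist hWne p
  exact ⟨Metric.infDist_eq_of_subset_of_mem (fun _ hy => hy.1) (nearest_visible w hw hpw.symm)
    hpw, nearest_visible⟩

theorem stmt8 (O p : EuclideanSpace ℝ (Fin 2)) (W : Set (EuclideanSpace ℝ (Fin 2)))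
    (hWne : W.Nonempty) (hWclosed : IsClosed W)
    (m M L ℓ R D : ℝ)
    (hm : 0 < m) (hmM : m ≤ M) (hL : 0 < L) (hl : 0 < ℓ) (hRpos : 0 < R) (hDpos : 0 < D)
    (hR : R > L + ℓ + M / 2)
    (hDist : ∀ x ∈ W, D ≤ dist O x)
    (hD : D ^ 2 ≥ (L + ℓ) ^ 2 - m ^ 2 / 4)
    (hp : dist O p ≤ L + ℓ)
    (hpM : Metric.infDist p W ≤ M / 2)
    (hpm : m / 2 ≤ Metric.infDist p W) :
    Metric.infDist p {w ∈ W | dist O w ≤ R ∧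
        ¬ ∃ x ∈ W, ∃ s : ℝ, 0 < s ∧ s < 1 ∧ x = O + s • (w - O)} = Metric.infDist p W ∧
      ∀ w ∈ W, dist p w = Metric.infDist p W →
        w ∈ {w ∈ W | dist O w ≤ R ∧
          ¬ ∃ x ∈ W, ∃ s : ℝ, 0 < s ∧ s < 1 ∧ x = O + s • (w - O)} :=
  stmt8_general O p W hWne hWclosed m M L ℓ R D hm hDpos hR hDist hD hp hpM hpm
end

section
/- Disk-minus-halfplane separation: In ℝ², let u be a point, H a closed half-plane with u ∈ H whose boundary line is at distance d + c/2 from a point O (with the nearest boundary point being the midpoint between two collinear points w and u with dist(O,w)=d, dist(w,u)=c, w between O and u). If (d + c/2)² + m²/4 − c²/4 > (L+ℓ)², then the set H \ ball(u, m/2) is disjoint from the closed disk of radius L+ℓ centered at O. -/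
/-! Write `w = O + d • e` and `u = O + (d + c) • e` with `e` a unit vector and `t = ⟪p - O, e⟫`.
The points nearer to `u` than to `w` form the half-plane `t ≥ d + c / 2`, bounded by the
perpendicular bisector of `w u`. Expanding `‖p - O‖² = ‖p - u‖² + 2 (d + c) t - (d + c)²` then gives
`‖p - O‖² ≥ ‖p - u‖² + d (d + c) ≥ m² / 4 + (d + c / 2)² - c² / 4 > (L + ℓ)²`
on that half-plane outside `ball u (m / 2)`. -/

open RealInnerProductSpace

section UnitDirection

variable {E : Type*} [NormedAddCommGroup E] [InnerProductSpace ℝ E] {e : E}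

theorem dist_add_smul_sq (he : ‖e‖ = 1) (p O : E) (s : ℝ) :
    dist p (O + s • e) ^ 2 = dist p O ^ 2 - 2 * s * ⟪p - O, e⟫ + s ^ 2 := by
  rw [dist_eq_norm, dist_eq_norm, show p - (O + s • e) = (p - O) - s • e by abel,
    norm_sub_sq_real, real_inner_smul_right, norm_smul, he, mul_one, Real.norm_eq_abs, sq_abs]
  ring

theorem dist_add_smul_le_dist_add_smul_iff (he : ‖e‖ = 1) (p O : E) (d : ℝ) {c : ℝ}
    (hc : 0 < c) :
    dist p (O + (d + c) • e) ≤ dist p (O + d • e) ↔ d + c / 2 ≤ ⟪p - O, e⟫ := by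
  rw [← sq_le_sq₀ dist_nonneg dist_nonneg, dist_add_smul_sq he, dist_add_smul_sq he]
  constructor <;> intro h <;> nlinarith

theorem sq_dist_add_le_sq_dist_of_dist_le (he : ‖e‖ = 1) {p O : E} {d c : ℝ} (hd : 0 ≤ d)
    (hc : 0 < c) (h : dist p (O + (d + c) • e) ≤ dist p (O + d • e)) :
    dist p (O + (d + c) • e) ^ 2 + d * (d + c) ≤ dist p O ^ 2 := by
  have ht := (dist_add_smul_le_dist_add_smul_iff he p O d hc).1 h
  rw [dist_add_smul_sq he]
  nlinarith

end UnitDirection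

theorem stmt11 (O w u : EuclideanSpace ℝ (Fin 2)) (d c m L ℓ : ℝ)
    (hd : d = dist O w) (hdpos : 0 < d) (hcpos : 0 < c) (hm : 0 < m)
    (hu : u = O + ((d + c) / d) • (w - O))
    (hineq : (d + c / 2) ^ 2 + m ^ 2 / 4 - c ^ 2 / 4 > (L + ℓ) ^ 2) :
    {p : EuclideanSpace ℝ (Fin 2) | dist p u ≤ dist p w ∧ m / 2 ≤ dist p u} ∩
      Metric.closedBall O (L + ℓ) = ∅ := by
  set e := d⁻¹ • (w - O)
  have he : ‖e‖ = 1 := by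
    rw [norm_smul, ← dist_eq_norm, dist_comm, ← hd, norm_inv, Real.norm_of_nonneg hdpos.le,
      inv_mul_cancel₀ hdpos.ne']
  have hw : w = O + d • e := by
    rw [smul_smul, mul_inv_cancel₀ hdpos.ne', one_smul, add_sub_cancel]
  have hu' : u = O + (d + c) • e := by rw [hu, smul_smul, div_eq_mul_inv]
  rw [Set.eq_empty_iff_forall_notMem]
  rintro p ⟨⟨hnear, hfar⟩, hball⟩
  rw [hw, hu'] at hnear
  have hO := sq_dist_add_le_sq_dist_of_dist_le he hdpos.le hcpos hnear
  rw [← hu'] at hO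
  have hfar_sq : (m / 2) ^ 2 ≤ dist p u ^ 2 := pow_le_pow_left₀ (by positivity) hfar 2
  have hball_sq : dist p O ^ 2 ≤ (L + ℓ) ^ 2 :=
    pow_le_pow_left₀ dist_nonneg (Metric.mem_closedBall.1 hball) 2
  nlinarith
end
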